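/- arXiv:1102.3634 — 3 statements merged into one kernel-verified Lean document; each statement's English description precedes it below -/
import Mathlib

section
/- Let x, k, x̂, k̂ : [0, T] → ℝ^d be continuous with k, k̂ of bounded variation, k(0) = k̂(0) = 0, and suppose dk(t) ∈ ∂φ(x(t))(dt) and dk̂(t) ∈ ∂φ(x̂(t))(dt), i.e. for all 0 ≤ s ≤ t ≤ T and continuous y: ∫_s^t ⟨y(r)−x(r), dk(r)⟩ + ∫_s^t φ(x(r)) dr ≤ ∫_s^t φ(y(r)) dr (and similarly for (x̂, k̂)). Then ∫_s^t ⟨x(r) − x̂(r), dk(r) − dk̂(r)⟩ ≥ 0 for all 0 ≤ s ≤ t ≤ T. -/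
open MeasureTheory Set
open scoped RealInnerProductSpace

/-- `dk ∈ ∂φ(x(t))(dt)` on `[0,T]`, where the vector measure `dk` is represented
in polar form `dk = h dν` with `ν` the total-variation measure and `‖h‖ = 1`. -/
def IsSubdiffMeasure {d : ℕ} (φ : EuclideanSpace ℝ (Fin d) → EReal) (T : ℝ)
    (x : ℝ → EuclideanSpace ℝ (Fin d)) (ν : Measure ℝ)
    (h : ℝ → EuclideanSpace ℝ (Fin d)) : Prop :=
  Continuous x ∧ (∀ r, ‖h r‖ = 1) ∧ ν (Icc 0 T) < ⊤ ∧
    ∀ s t : ℝ, 0 ≤ s → s ≤ t → t ≤ T →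
      ∀ y : ℝ → EuclideanSpace ℝ (Fin d), Continuous y →
        ∀ φx φy : ℝ → ℝ, (∀ r ∈ Icc (0 : ℝ) T, (φx r : EReal) = φ (x r)) →
          (∀ r ∈ Icc (0 : ℝ) T, (φy r : EReal) = φ (y r)) →
          (∫ r in Ioc s t, ⟪y r - x r, h r⟫ ∂ν) + ∫ r in Ioc s t, φx r
            ≤ ∫ r in Ioc s t, φy r

/-- Monotonicity of the subdifferential (Lemma 4.1): if
`dk ∈ ∂φ(x(t))(dt)` and `dk̂ ∈ ∂φ(x̂(t))(dt)`, then
`∫_s^t ⟨x − x̂, dk − dk̂⟩ ≥ 0` for all `0 ≤ s ≤ t ≤ T`. -/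
theorem stmt_7 {d : ℕ} (φ : EuclideanSpace ℝ (Fin d) → EReal)
    (hproper : ∀ z, φ z ≠ ⊥) (hpr : ∃ z, φ z ≠ ⊤)
    (hlsc : LowerSemicontinuous φ)
    (hconvex : ∀ x y : EuclideanSpace ℝ (Fin d), ∀ a b : ℝ, 0 ≤ a → 0 ≤ b → a + b = 1 →
      φ (a • x + b • y) ≤ (a : EReal) * φ x + (b : EReal) * φ y)
    (T : ℝ) (hT : 0 ≤ T)
    (x xh : ℝ → EuclideanSpace ℝ (Fin d))
    (ν νh : Measure ℝ) (h hh : ℝ → EuclideanSpace ℝ (Fin d))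
    (hsub : IsSubdiffMeasure φ T x ν h) (hsubh : IsSubdiffMeasure φ T xh νh hh)
    (φx φxh : ℝ → ℝ)
    (hφx : ∀ r ∈ Icc (0 : ℝ) T, (φx r : EReal) = φ (x r))
    (hφxh : ∀ r ∈ Icc (0 : ℝ) T, (φxh r : EReal) = φ (xh r))
    (s t : ℝ) (hs : 0 ≤ s) (hst : s ≤ t) (htT : t ≤ T) :
    0 ≤ (∫ r in Ioc s t, ⟪x r - xh r, h r⟫ ∂ν)
        - ∫ r in Ioc s t, ⟪x r - xh r, hh r⟫ ∂νh := by
  have h1 := hsub.2.2.2 s t hs hst htT xh hsubh.1 φx φxh hφx hφxh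
  have h2 := hsubh.2.2.2 s t hs hst htT x hsub.1 φxh φx hφxh hφx
  have e1 : (∫ r in Ioc s t, ⟪xh r - x r, h r⟫ ∂ν)
      = -∫ r in Ioc s t, ⟪x r - xh r, h r⟫ ∂ν := by
    rw [← integral_neg]
    congr 1; funext r
    rw [← inner_neg_left, neg_sub]
  rw [e1] at h1
  linarith
end

section
/- Let E ⊆ ℝ^d be closed convex, r₀ > 0 with E_{r₀} = {x ∈ E : dist(x, E^c) ≥ r₀} nonempty, and h₀ = sup_{z∈E} dist(z, E_{r₀}) < ∞. Fix 0 < δ ≤ r₀/(2(1+h₀)), y ∈ E, ŷ = π_{E_{r₀}}(y) the projection of y on E_{r₀}, and v_y = (ŷ − y)/(1+h₀). Then for every x ∈ E with |x − y| ≤ δ, the closed ball B̄(x + v_y, δ) is contained in E. -/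
open Metric

/-- Interior-ball property: if `E` is closed convex with nonempty `r₀`-interior
`E_{r₀}` and `h₀` bounds `dist(z, E_{r₀})` over `z ∈ E`, then for
`0 < δ ≤ r₀/(2(1+h₀))`, `y ∈ E`, `yproj` the projection of `y` on `E_{r₀}` and
`v_y = (yproj − y)/(1+h₀)`, every `x ∈ E` with `|x − y| ≤ δ` satisfies
`B̄(x + v_y, δ) ⊆ E`. -/
theorem stmt_8 {d : ℕ} (E : Set (EuclideanSpace ℝ (Fin d)))
    (hE : IsClosed E) (hconv : Convex ℝ E)
    (r₀ : ℝ) (hr₀ : 0 < r₀)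
    (Er : Set (EuclideanSpace ℝ (Fin d)))
    (hEr : Er = {z ∈ E | r₀ ≤ Metric.infDist z Eᶜ}) (hne : Er.Nonempty)
    (h₀ : ℝ) (hh₀ : ∀ z ∈ E, Metric.infDist z Er ≤ h₀)
    (δ : ℝ) (hδ : 0 < δ) (hδ' : δ ≤ r₀ / (2 * (1 + h₀)))
    (y : EuclideanSpace ℝ (Fin d)) (hy : y ∈ E)
    (yproj : EuclideanSpace ℝ (Fin d)) (hyproj : yproj ∈ Er)
    (hproj : ‖y - yproj‖ = Metric.infDist y Er)
    (x : EuclideanSpace ℝ (Fin d)) (hxE : x ∈ E) (hxy : ‖x - y‖ ≤ δ) :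
    Metric.closedBall (x + (1 / (1 + h₀)) • (yproj - y)) δ ⊆ E := by
  have hh0 : (0:ℝ) ≤ h₀ := le_trans Metric.infDist_nonneg (hh₀ y hy)
  have hpos : (0:ℝ) < 1 + h₀ := by linarith
  set t : ℝ := 1 / (1 + h₀) with ht
  have ht0 : 0 < t := by positivity
  have ht1 : t ≤ 1 := by rw [ht, div_le_one hpos]; linarith
  have htinv : t⁻¹ = 1 + h₀ := by rw [ht, one_div, inv_inv]
  clear_value t
  -- the closed ball around yproj is inside E
  have hyE : r₀ ≤ Metric.infDist yproj Eᶜ := by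
    rw [hEr] at hyproj; exact hyproj.2
  have hball : Metric.closedBall yproj r₀ ⊆ E := by
    have h1 : Metric.ball yproj r₀ ⊆ E := by
      intro z hz
      by_contra hzE
      have h2 : Metric.infDist yproj Eᶜ ≤ dist yproj z :=
        Metric.infDist_le_dist_of_mem hzE
      rw [Metric.mem_ball, dist_comm] at hz
      linarith
    calc Metric.closedBall yproj r₀ = closure (Metric.ball yproj r₀) :=
          (closure_ball yproj hr₀.ne').symm
      _ ⊆ closure E := closure_mono h1
      _ = E := hE.closure_eq
  intro w hw
  rw [Metric.mem_closedBall, dist_eq_norm] at hw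
  set e : EuclideanSpace ℝ (Fin d) := w - (x + t • (yproj - y)) with he
  have hne' : ‖e‖ ≤ δ := hw
  clear_value e
  set z : EuclideanSpace ℝ (Fin d) := yproj + (x - y) + t⁻¹ • e with hz
  have hzball : z ∈ Metric.closedBall yproj r₀ := by
    rw [Metric.mem_closedBall, dist_eq_norm]
    have hzy : z - yproj = (x - y) + t⁻¹ • e := by rw [hz]; abel
    rw [hzy]
    have hb : ‖(x - y) + t⁻¹ • e‖ ≤ ‖x - y‖ + ‖t⁻¹ • e‖ := norm_add_le _ _
    have hs : ‖t⁻¹ • e‖ = (1 + h₀) * ‖e‖ := by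
      rw [norm_smul, htinv, Real.norm_eq_abs, abs_of_pos hpos]
    have hδr : δ * (2 * (1 + h₀)) ≤ r₀ := by
      rw [le_div_iff₀ (by positivity : (0:ℝ) < 2 * (1 + h₀))] at hδ'
      linarith
    nlinarith [norm_nonneg e, norm_nonneg (x - y), mul_le_mul_of_nonneg_left hne' hpos.le]
  have hzE : z ∈ E := hball hzball
  clear_value z
  have hcomb : (1 - t) • x + t • z = w := by
    have hw' : w = x + t • (yproj - y) + e := by rw [he]; abel
    rw [hz, hw', smul_add, smul_add, smul_inv_smul₀ ht0.ne']
    module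
  have hab : (1 - t) + t = 1 := by ring
  have hmem := hconv hxE hzE (by linarith : (0:ℝ) ≤ 1 - t) ht0.le hab
  rwa [hcomb] at hmem
end

section
/- Let g : ℝ₊ → ℝ₊ be continuous with g(0) = 0 and G : C(ℝ₊; ℝ^d) → ℝ₊ bounded on compact sets. Let X^n, Y^n (n ≥ 1) be random variables valued in C(ℝ₊; ℝ^d). If {Y^n : n ≥ 1} is tight, |X^n_0| ≤ G(Y^n) a.s., and the modulus of continuity on each [0,T] satisfies m_{X^n}(ε; [0,T]) ≤ G(Y^n) g(m_{Y^n}(ε; [0,T])) a.s. for all ε, T > 0 and n, then {X^n : n ≥ 1} is tight in C(ℝ₊; ℝ^d). -/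
/-!
A compact set of paths is uniformly equicontinuous on every `[0, T]`. Since `g` is continuous
with `g 0 = 0`, for the compact set `K_Y` given by the tightness of `(Yⁿ)` one can choose
`δ_m > 0` with `g (m_f(δ_m; [0, m+1])) ≤ 1/(m+1)` for all `f ∈ K_Y`. With `M` a bound of `G` on
`K_Y`, on the event `{Yⁿ ∈ K_Y}` the hypotheses (needed only for the countably many pairs
`(δ_m, m+1)`, hence almost surely all at once) give `‖Xⁿ₀‖ ≤ M` and
`m_{Xⁿ}(δ_m; [0, m+1]) ≤ M/(m+1)`. By Arzelà–Ascoli the paths obeying these bounds have compact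
closure `K_X`, and `P(Xⁿ ∉ K_X) ≤ P(Yⁿ ∉ K_Y)`.
-/

open MeasureTheory Set
open scoped NNReal ENNReal

/-- The modulus of continuity of a continuous path on `[0,T]`. -/
noncomputable def modC {d : ℕ} (f : C(ℝ≥0, EuclideanSpace ℝ (Fin d)))
    (ε T : ℝ≥0) : ℝ :=
  sSup {r : ℝ | ∃ u v : ℝ≥0, u ≤ T ∧ v ≤ T ∧ dist u v ≤ (ε : ℝ) ∧ r = ‖f u - f v‖}

open Filter Topology

theorem ContinuousMap.isCompact_closure_of_equicontinuous {X α : Type*} [TopologicalSpace X]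
    [CompactlyCoherentSpace X] [UniformSpace α] [T2Space α] {S : Set C(X, α)}
    (hS : Equicontinuous ((↑) : S → X → α)) (hpt : ∀ x, ∃ Q, IsCompact Q ∧ ∀ f ∈ S, f x ∈ Q) :
    IsCompact (closure S) := by
  have hclosed : IsClosedEmbedding (toUniformOnFunIsCompact : C(X, α) → _) :=
    ⟨isUniformEmbedding_toUniformOnFunIsCompact.isEmbedding, by
      rw [range_toUniformOnFunIsCompact]
      exact UniformOnFun.isClosed_setOfPred_continuous CompactlyCoherentSpace.isCoherentWith⟩
  exact ArzelaAscoli.isCompact_closure_of_isClosedEmbedding (fun _ hK ↦ hK) hclosed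
    (fun K _ ↦ hS.equicontinuousOn K) (fun _ _ x _ ↦ hpt x)

theorem IsCompact.exists_pos_forall_dist_apply_lt {X α : Type*} [PseudoMetricSpace X]
    [LocallyCompactSpace X] [PseudoMetricSpace α] {K : Set C(X, α)} (hK : IsCompact K)
    {S : Set X} (hS : IsCompact S) {ε : ℝ} (hε : 0 < ε) :
    ∃ δ > 0, ∀ f ∈ K, ∀ u ∈ S, ∀ v ∈ S, dist u v < δ → dist (f u) (f v) < ε := by
  have hunif : UniformContinuousOn (fun p : C(X, α) × X ↦ p.1 p.2) (K ×ˢ S) :=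
    (hK.prod hS).uniformContinuousOn_of_continuous continuous_eval.continuousOn
  have hmem := mem_inf_principal.mp (hunif (Metric.dist_mem_uniformity hε))
  rw [uniformity_prod_eq_prod, mem_map, mem_prod_iff] at hmem
  obtain ⟨t₁, ht₁, t₂, ht₂, hsub⟩ := hmem
  obtain ⟨δ, hδ, hδt₂⟩ := Metric.mem_uniformity_dist.mp ht₂
  exact ⟨δ, hδ, fun f hf u hu v hv huv ↦
    hsub (mk_mem_prod (refl_mem_uniformity ht₁) (hδt₂ huv)) ⟨⟨hf, hu⟩, hf, hv⟩⟩

section modC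

variable {d : ℕ}

theorem bddAbove_modC_set (f : C(ℝ≥0, EuclideanSpace ℝ (Fin d))) (ε T : ℝ≥0) :
    BddAbove {r : ℝ | ∃ u v : ℝ≥0, u ≤ T ∧ v ≤ T ∧ dist u v ≤ (ε : ℝ) ∧ r = ‖f u - f v‖} := by
  obtain ⟨C, hC⟩ := (isCompact_Icc : IsCompact (Icc 0 T)).exists_bound_of_continuousOn
    f.continuous.continuousOn
  refine ⟨C + C, ?_⟩
  rintro r ⟨u, v, hu, hv, -, rfl⟩
  exact (norm_sub_le _ _).trans (add_le_add (hC u ⟨zero_le, hu⟩) (hC v ⟨zero_le, hv⟩))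

theorem le_modC (f : C(ℝ≥0, EuclideanSpace ℝ (Fin d))) {u v ε T : ℝ≥0}
    (hu : u ≤ T) (hv : v ≤ T) (huv : dist u v ≤ ε) : ‖f u - f v‖ ≤ modC f ε T :=
  le_csSup (bddAbove_modC_set f ε T) ⟨u, v, hu, hv, huv, rfl⟩

theorem modC_nonneg (f : C(ℝ≥0, EuclideanSpace ℝ (Fin d))) (ε T : ℝ≥0) : 0 ≤ modC f ε T := by
  simpa using le_modC f zero_le zero_le (by simp : dist (0 : ℝ≥0) 0 ≤ ε)

theorem modC_le (f : C(ℝ≥0, EuclideanSpace ℝ (Fin d))) {ε T : ℝ≥0} {c : ℝ}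
    (h : ∀ u v : ℝ≥0, u ≤ T → v ≤ T → dist u v ≤ ε → ‖f u - f v‖ ≤ c) : modC f ε T ≤ c :=
  csSup_le ⟨0, 0, 0, zero_le, zero_le, by simp, by simp⟩ <| by
    rintro r ⟨u, v, hu, hv, huv, rfl⟩
    exact h u v hu hv huv

theorem norm_sub_apply_zero_le_mul_modC (f : C(ℝ≥0, EuclideanSpace ℝ (Fin d)))
    {δ T x : ℝ≥0} {N : ℕ} (hxT : x ≤ T) (hxN : x ≤ N * δ) :
    ‖f x - f 0‖ ≤ N * modC f δ T := by
  rcases N.eq_zero_or_pos with rfl | hN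
  · simp_all
  set p : ℕ → ℝ≥0 := fun k ↦ k / N * x
  have hp_le : ∀ k ≤ N, p k ≤ T := fun k hk ↦
    (mul_le_of_le_one_left' (div_le_one_of_le₀ (by exact_mod_cast hk) (by positivity))).trans hxT
  have hp_dist : ∀ k, dist (p k) (p (k + 1)) ≤ δ := by
    intro k
    have hstep : (p (k + 1) : ℝ) = p k + x / N := by
      simp only [p, NNReal.coe_mul, NNReal.coe_div, NNReal.coe_natCast]
      push_cast
      ring
    rw [NNReal.dist_eq, hstep, sub_add_cancel_left, abs_neg, abs_of_nonneg (by positivity)]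
    exact div_le_of_le_mul₀ (by positivity) δ.2 (by rw [mul_comm]; exact_mod_cast hxN)
  calc ‖f x - f 0‖ = dist (f (p 0)) (f (p N)) := by
        have hN' : (N : ℝ≥0) ≠ 0 := by positivity
        simp [p, dist_eq_norm', hN']
    _ ≤ ∑ k ∈ Finset.range N, dist (f (p k)) (f (p (k + 1))) :=
        dist_le_range_sum_dist (fun k ↦ f (p k)) N
    _ ≤ ∑ k ∈ Finset.range N, modC f δ T := Finset.sum_le_sum fun k hk ↦ by
        rw [dist_eq_norm]
        have hk := Finset.mem_range.mp hk
        exact le_modC f (hp_le k hk.le) (hp_le (k + 1) hk) (hp_dist k)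
    _ = N * modC f δ T := by simp

theorem equicontinuous_of_modC_le {S : Set C(ℝ≥0, EuclideanSpace ℝ (Fin d))}
    {δ : ℕ → ℝ≥0} (hδ : ∀ m, 0 < δ m) {b : ℕ → ℝ} (hb : Tendsto b atTop (𝓝 0))
    (hS : ∀ f ∈ S, ∀ m : ℕ, modC f (δ m) (m + 1) ≤ b m) :
    Equicontinuous ((↑) : S → ℝ≥0 → EuclideanSpace ℝ (Fin d)) := by
  intro x
  rw [Metric.equicontinuousAt_iff]
  intro ε hε
  obtain ⟨m, hbm, hxm⟩ :=
    ((hb.eventually (gt_mem_nhds hε)).and (eventually_ge_atTop ⌈(x : ℝ)⌉₊)).exists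
  have hx : (x : ℝ) + 1 ≤ m + 1 := by gcongr; exact (Nat.le_ceil _).trans (by exact_mod_cast hxm)
  refine ⟨min (δ m : ℝ) 1, lt_min (hδ m) one_pos, fun y hy f ↦ ?_⟩
  have hy1 : (y : ℝ) ≤ x + 1 := by
    have := (le_abs_self _).trans_lt ((NNReal.dist_eq y x ▸ hy).trans_le (min_le_right _ _))
    linarith
  rw [dist_eq_norm]
  refine (le_modC f.1 ?_ ?_ ?_).trans_lt ((hS f f.2 m).trans_lt hbm)
  · exact_mod_cast (le_add_of_nonneg_right zero_le_one).trans hx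
  · exact_mod_cast hy1.trans hx
  · exact (dist_comm x y ▸ hy).le.trans (min_le_left _ _)

theorem isCompact_closure_setOf_modC_le (R : ℝ) {δ : ℕ → ℝ≥0} (hδ : ∀ m, 0 < δ m)
    {b : ℕ → ℝ} (hb : Tendsto b atTop (𝓝 0)) :
    IsCompact (closure {f : C(ℝ≥0, EuclideanSpace ℝ (Fin d)) |
      ‖f 0‖ ≤ R ∧ ∀ m : ℕ, modC f (δ m) (m + 1) ≤ b m}) := by
  refine ContinuousMap.isCompact_closure_of_equicontinuous
    (equicontinuous_of_modC_le hδ hb fun f hf ↦ hf.2) fun x ↦ ?_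
  set m := ⌈(x : ℝ)⌉₊
  have hxm : x ≤ m + 1 := by
    rw [← NNReal.coe_le_coe]; push_cast; linarith [Nat.le_ceil (x : ℝ)]
  obtain ⟨N, hN⟩ := Archimedean.arch x (hδ m)
  refine ⟨Metric.closedBall 0 (R + N * b m), isCompact_closedBall _ _, fun f hf ↦ ?_⟩
  rw [mem_closedBall_zero_iff]
  calc ‖f x‖ ≤ ‖f 0‖ + ‖f x - f 0‖ := norm_le_norm_add_norm_sub' _ _
    _ ≤ R + N * b m := add_le_add hf.1 <|
        (norm_sub_apply_zero_le_mul_modC f hxm (nsmul_eq_mul N (δ m) ▸ hN)).trans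
          (by gcongr; exact hf.2 m)

theorem IsCompact.exists_pos_forall_comp_modC_lt {K : Set C(ℝ≥0, EuclideanSpace ℝ (Fin d))}
    (hK : IsCompact K) {g : ℝ → ℝ} (hg : Tendsto g (𝓝 0) (𝓝 0)) (T : ℝ≥0) {c : ℝ}
    (hc : 0 < c) : ∃ δ : ℝ≥0, 0 < δ ∧ ∀ f ∈ K, g (modC f δ T) < c := by
  obtain ⟨ρ, hρ, hgρ⟩ := Metric.eventually_nhds_iff.mp (hg.eventually (gt_mem_nhds hc))
  obtain ⟨δ, hδ, hKδ⟩ := hK.exists_pos_forall_dist_apply_lt isCompact_Icc (half_pos hρ)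
  lift δ to ℝ≥0 using hδ.le
  refine ⟨δ / 2, half_pos (mod_cast hδ), fun f hf ↦ hgρ ?_⟩
  have hmod : modC f (δ / 2) T ≤ ρ / 2 := modC_le f fun u v hu hv huv ↦ by
    rw [← dist_eq_norm]
    refine (hKδ f hf u ⟨zero_le, hu⟩ v ⟨zero_le, hv⟩ (huv.trans_lt ?_)).le
    exact_mod_cast half_lt_self (mod_cast hδ : 0 < δ)
  rw [Real.dist_0_eq_abs, abs_of_nonneg (modC_nonneg f _ T)]
  linarith

end modC

theorem stmt_13_general {d : ℕ} {Ω : Type*} [MeasurableSpace Ω]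
    (P : Measure Ω) [IsProbabilityMeasure P]
    (g : ℝ → ℝ) (hgc : Continuous g) (hg0 : g 0 = 0)
    (G : C(ℝ≥0, EuclideanSpace ℝ (Fin d)) → ℝ)
    (hGb : ∀ K : Set C(ℝ≥0, EuclideanSpace ℝ (Fin d)), IsCompact K →
      ∃ M : ℝ, ∀ f ∈ K, G f ≤ M)
    (X Y : ℕ → Ω → C(ℝ≥0, EuclideanSpace ℝ (Fin d)))
    (hYtight : ∀ η : ℝ≥0∞, 0 < η →
      ∃ K : Set C(ℝ≥0, EuclideanSpace ℝ (Fin d)), IsCompact K ∧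
        ∀ n : ℕ, 1 ≤ n → P {ω | Y n ω ∉ K} ≤ η)
    (h0 : ∀ n : ℕ, 1 ≤ n → ∀ᵐ ω ∂P, ‖X n ω 0‖ ≤ G (Y n ω))
    (hm : ∀ ε T : ℝ≥0, 0 < ε → 0 < T → ∀ n : ℕ, 1 ≤ n →
      ∀ᵐ ω ∂P, modC (X n ω) ε T ≤ G (Y n ω) * g (modC (Y n ω) ε T)) :
    ∀ η : ℝ≥0∞, 0 < η →
      ∃ K : Set C(ℝ≥0, EuclideanSpace ℝ (Fin d)), IsCompact K ∧
        ∀ n : ℕ, 1 ≤ n → P {ω | X n ω ∉ K} ≤ η := by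
  intro η hη
  obtain ⟨KY, hKY, hYKY⟩ := hYtight η hη
  obtain ⟨M, hM⟩ := hGb KY hKY
  choose δ hδ hδKY using fun m : ℕ ↦
    hKY.exists_pos_forall_comp_modC_lt (hgc.tendsto' 0 0 hg0) (m + 1)
      (by positivity : (0 : ℝ) < 1 / (m + 1))
  have hb : Tendsto (fun m : ℕ ↦ M / ((m : ℝ) + 1)) atTop (𝓝 0) := by
    simpa [Function.comp_def] using
      (tendsto_const_div_atTop_nhds_zero_nat M).comp (tendsto_add_atTop_nat 1)
  refine ⟨_, isCompact_closure_setOf_modC_le M hδ hb, fun n hn ↦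
    (measure_mono_ae ?_).trans (hYKY n hn)⟩
  have hmn : ∀ᵐ ω ∂P, ∀ m : ℕ,
      modC (X n ω) (δ m) (m + 1) ≤ G (Y n ω) * g (modC (Y n ω) (δ m) (m + 1)) :=
    ae_all_iff.mpr fun m ↦ hm _ _ (hδ m) (by positivity) n hn
  filter_upwards [h0 n hn, hmn] with ω h0ω hmω hXω hYω
  refine hXω (subset_closure ⟨h0ω.trans (hM _ hYω), fun m ↦ (hmω m).trans ?_⟩)
  have hG : 0 ≤ G (Y n ω) := (norm_nonneg _).trans h0ω
  calc G (Y n ω) * g (modC (Y n ω) (δ m) (m + 1))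
      ≤ G (Y n ω) * (1 / (m + 1)) := mul_le_mul_of_nonneg_left (hδKY m _ hYω).le hG
    _ ≤ M * (1 / (m + 1)) := mul_le_mul_of_nonneg_right (hM _ hYω) (by positivity)
    _ = M / (m + 1) := mul_one_div _ _

/-- Comparison tightness lemma (ch1-p2-tight): if `{Y^n}` is tight,
`|X^n_0| ≤ G(Y^n)` a.s. and
`m_{X^n}(ε;[0,T]) ≤ G(Y^n) g(m_{Y^n}(ε;[0,T]))` a.s., with `g` continuous,
`g(0)=0` and `G` bounded on compacts, then `{X^n}` is tight. -/
theorem stmt_13 {d : ℕ} {Ω : Type*} [MeasurableSpace Ω]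
    (P : Measure Ω) [IsProbabilityMeasure P]
    (g : ℝ → ℝ) (hgc : Continuous g) (hg0 : g 0 = 0) (hgnn : ∀ r, 0 ≤ r → 0 ≤ g r)
    (G : C(ℝ≥0, EuclideanSpace ℝ (Fin d)) → ℝ) (hGnn : ∀ f, 0 ≤ G f)
    (hGb : ∀ K : Set C(ℝ≥0, EuclideanSpace ℝ (Fin d)), IsCompact K →
      ∃ M : ℝ, ∀ f ∈ K, G f ≤ M)
    (X Y : ℕ → Ω → C(ℝ≥0, EuclideanSpace ℝ (Fin d)))
    (hYtight : ∀ η : ℝ≥0∞, 0 < η →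
      ∃ K : Set C(ℝ≥0, EuclideanSpace ℝ (Fin d)), IsCompact K ∧
        ∀ n : ℕ, 1 ≤ n → P {ω | Y n ω ∉ K} ≤ η)
    (h0 : ∀ n : ℕ, 1 ≤ n → ∀ᵐ ω ∂P, ‖X n ω 0‖ ≤ G (Y n ω))
    (hm : ∀ ε T : ℝ≥0, 0 < ε → 0 < T → ∀ n : ℕ, 1 ≤ n →
      ∀ᵐ ω ∂P, modC (X n ω) ε T ≤ G (Y n ω) * g (modC (Y n ω) ε T)) :
    ∀ η : ℝ≥0∞, 0 < η →
      ∃ K : Set C(ℝ≥0, EuclideanSpace ℝ (Fin d)), IsCompact K ∧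
        ∀ n : ℕ, 1 ≤ n → P {ω | X n ω ∉ K} ≤ η :=
  stmt_13_general P g hgc hg0 G hGb X Y hYtight h0 hm
end
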